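/- Let α > 1 and suppose v : [0,∞) → ℝ is continuously differentiable, satisfies v'(t) = -v(t) + 2v(αt) - v(αt)², and |v(t)| = O(e^{-ρt}) for some ρ ∈ (0,1). Then v(t) = O(e^{-t}) as t → ∞. -/

import Mathlib

open Real MeasureTheory

private lemma my_integral_exp_cmul (c : ℝ) (hc : c ≠ 0) (t : ℝ) :
    ∫ s in (0:ℝ)..t, Real.exp (c * s) = (Real.exp (c * t) - 1) / c := by
  have h : ∀ s ∈ Set.uIcc (0:ℝ) t,
      HasDerivAt (fun s => Real.exp (c * s) / c) (Real.exp (c * s)) s := by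
    intro s _
    have h1 : HasDerivAt (fun s : ℝ => c * s) c s := by
      simpa using (hasDerivAt_id s).const_mul c
    have h2 := ((Real.hasDerivAt_exp (c * s)).comp s h1).div_const c
    have : Real.exp (c * s) * c / c = Real.exp (c * s) := by
      field_simp
    simpa [this] using h2
  have hint : IntervalIntegrable (fun s => Real.exp (c * s)) volume 0 t :=
    (Real.continuous_exp.comp (continuous_const.mul continuous_id)).intervalIntegrable 0 t
  rw [intervalIntegral.integral_eq_sub_of_hasDerivAt h hint]
  simp [sub_div]

private lemma my_step (α : ℝ) (hα : 1 < α) (v : ℝ → ℝ)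
    (hv : ∀ t : ℝ, 0 ≤ t →
      HasDerivAt v (-v t + 2 * v (α * t) - (v (α * t)) ^ 2) t)
    (C ρ σ : ℝ) (hρ : 0 < ρ) (hσ1 : σ ≤ 1) (hσ : σ < ρ * α)
    (hb : ∀ t : ℝ, 0 ≤ t → |v t| ≤ C * Real.exp (-ρ * t)) :
    ∃ C', ∀ t : ℝ, 0 ≤ t → |v t| ≤ C' * Real.exp (-σ * t) := by
  have hα0 : (0:ℝ) < α := lt_trans one_pos hα
  have hC : 0 ≤ C := le_trans (abs_nonneg _) (by simpa using hb 0 le_rfl)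
  set K : ℝ := 2 * C + C ^ 2 with hK_def
  have hK : 0 ≤ K := by positivity
  set g : ℝ → ℝ := fun s => 2 * v (α * s) - v (α * s) ^ 2 with hg_def
  -- bound on g
  have hg : ∀ s : ℝ, 0 ≤ s → |g s| ≤ K * Real.exp (-(ρ * α) * s) := by
    intro s hs
    have hαs : 0 ≤ α * s := mul_nonneg hα0.le hs
    have h1 : |v (α * s)| ≤ C * Real.exp (-(ρ * α) * s) := by
      have := hb (α * s) hαs
      calc |v (α * s)| ≤ C * Real.exp (-ρ * (α * s)) := this
        _ = C * Real.exp (-(ρ * α) * s) := by ring_nf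
    have hexp_pos : (0:ℝ) < Real.exp (-(ρ * α) * s) := Real.exp_pos _
    have h2 : |v (α * s)| ^ 2 ≤ C ^ 2 * Real.exp (-(ρ * α) * s) := by
      have hsq : |v (α * s)| ^ 2 ≤ (C * Real.exp (-(ρ * α) * s)) ^ 2 := by
        exact pow_le_pow_left₀ (abs_nonneg _) h1 2
      have hle1 : Real.exp (-(ρ * α) * s) ≤ 1 := by
        apply Real.exp_le_one_iff.mpr
        have : 0 ≤ ρ * α * s := by positivity
        linarith
      calc |v (α * s)| ^ 2 ≤ (C * Real.exp (-(ρ * α) * s)) ^ 2 := hsq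
        _ = C ^ 2 * Real.exp (-(ρ * α) * s) * Real.exp (-(ρ * α) * s) := by ring
        _ ≤ C ^ 2 * Real.exp (-(ρ * α) * s) * 1 := by
            apply mul_le_mul_of_nonneg_left hle1 (by positivity)
        _ = C ^ 2 * Real.exp (-(ρ * α) * s) := by ring
    calc |g s| ≤ 2 * |v (α * s)| + |v (α * s)| ^ 2 := by
          have := abs_sub (2 * v (α * s)) (v (α * s) ^ 2)
          calc |g s| ≤ |2 * v (α * s)| + |v (α * s) ^ 2| := abs_sub _ _
            _ = 2 * |v (α * s)| + |v (α * s)| ^ 2 := by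
                rw [abs_mul, abs_pow]; norm_num
      _ ≤ 2 * (C * Real.exp (-(ρ * α) * s)) + C ^ 2 * Real.exp (-(ρ * α) * s) := by
          have h2' : 2 * |v (α * s)| ≤ 2 * (C * Real.exp (-(ρ * α) * s)) := by linarith
          linarith [h2]
      _ = K * Real.exp (-(ρ * α) * s) := by ring
  -- continuity of v on [0, ∞)
  have hvc : ContinuousOn v (Set.Ici 0) := fun s hs =>
    ((hv s hs).continuousAt).continuousWithinAt
  -- derivative of w = exp * v
  have hw : ∀ s : ℝ, 0 ≤ s →
      HasDerivAt (fun s => Real.exp s * v s) (Real.exp s * g s) s := by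
    intro s hs
    have := (Real.hasDerivAt_exp s).fun_mul (hv s hs)
    refine this.congr_deriv ?_
    show _ = Real.exp s * (2 * v (α * s) - v (α * s) ^ 2); ring
  -- main per-t estimate
  have key : ∀ t : ℝ, 0 ≤ t →
      |Real.exp t * v t| ≤ |v 0| + |∫ s in (0:ℝ)..t, K * Real.exp ((1 - ρ * α) * s)| := by
    intro t ht
    have huIcc : Set.uIcc (0:ℝ) t = Set.Icc 0 t := Set.uIcc_of_le ht
    have hcont : ContinuousOn (fun s => Real.exp s * g s) (Set.uIcc (0:ℝ) t) := by
      rw [huIcc]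
      apply (Real.continuous_exp.continuousOn).mul
      apply ContinuousOn.sub
      · apply ContinuousOn.mul continuousOn_const
        exact hvc.comp (continuous_const.mul continuous_id).continuousOn
          (fun s hs => mul_nonneg hα0.le hs.1)
      · apply ContinuousOn.pow
        exact hvc.comp (continuous_const.mul continuous_id).continuousOn
          (fun s hs => mul_nonneg hα0.le hs.1)
    have hint : IntervalIntegrable (fun s => Real.exp s * g s) volume 0 t :=
      hcont.intervalIntegrable
    have hftc : ∫ s in (0:ℝ)..t, Real.exp s * g s
        = Real.exp t * v t - Real.exp 0 * v 0 := by
      apply intervalIntegral.integral_eq_sub_of_hasDerivAt _ hint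
      intro x hx
      rw [huIcc] at hx
      exact hw x hx.1
    have hnorm : |∫ s in (0:ℝ)..t, Real.exp s * g s|
        ≤ |∫ s in (0:ℝ)..t, K * Real.exp ((1 - ρ * α) * s)| := by
      rw [← Real.norm_eq_abs]
      apply intervalIntegral.norm_integral_le_abs_of_norm_le
      · rw [MeasureTheory.ae_restrict_iff' measurableSet_uIoc]
        apply Filter.Eventually.of_forall
        intro s hs
        rw [Set.uIoc_of_le ht] at hs
        have hs0 : 0 ≤ s := hs.1.le
        have := hg s hs0
        calc ‖Real.exp s * g s‖ = Real.exp s * |g s| := by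
              rw [Real.norm_eq_abs, abs_mul, abs_of_pos (Real.exp_pos s)]
          _ ≤ Real.exp s * (K * Real.exp (-(ρ * α) * s)) := by
              apply mul_le_mul_of_nonneg_left this (Real.exp_pos s).le
          _ = K * Real.exp ((1 - ρ * α) * s) := by
              rw [show (1 - ρ * α) * s = s + -(ρ * α) * s by ring, Real.exp_add]; ring
      · exact (continuous_const.mul (Real.continuous_exp.comp
          (continuous_const.mul continuous_id))).intervalIntegrable 0 t
    have h0 : Real.exp t * v t = (Real.exp 0 * v 0) + ∫ s in (0:ℝ)..t, Real.exp s * g s := by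
      rw [hftc]; ring
    calc |Real.exp t * v t|
        ≤ |Real.exp 0 * v 0| + |∫ s in (0:ℝ)..t, Real.exp s * g s| := by
          rw [h0]; exact abs_add_le _ _
      _ ≤ |v 0| + |∫ s in (0:ℝ)..t, K * Real.exp ((1 - ρ * α) * s)| := by
          simp only [Real.exp_zero, one_mul]
          linarith [hnorm]
  -- now split on whether ρα > 1
  by_cases hcase : 1 < ρ * α
  · -- convergent integral case: rate 1
    refine ⟨|v 0| + K / (ρ * α - 1), fun t ht => ?_⟩
    have hc : (1 : ℝ) - ρ * α ≠ 0 := by linarith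
    have hIval : ∫ s in (0:ℝ)..t, K * Real.exp ((1 - ρ * α) * s)
        = K * ((Real.exp ((1 - ρ * α) * t) - 1) / (1 - ρ * α)) := by
      rw [intervalIntegral.integral_const_mul, my_integral_exp_cmul _ hc]
    have hexp_le : Real.exp ((1 - ρ * α) * t) ≤ 1 := by
      apply Real.exp_le_one_iff.mpr
      have : 0 ≤ (ρ * α - 1) * t := mul_nonneg (by linarith) ht
      nlinarith
    have habs : |∫ s in (0:ℝ)..t, K * Real.exp ((1 - ρ * α) * s)| ≤ K / (ρ * α - 1) := by
      rw [hIval]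
      have h1 : K * ((Real.exp ((1 - ρ * α) * t) - 1) / (1 - ρ * α))
          = K * ((1 - Real.exp ((1 - ρ * α) * t)) / (ρ * α - 1)) := by
        congr 1
        rw [div_eq_div_iff (by linarith) (by linarith)]
        ring
      rw [h1, abs_of_nonneg]
      · have hnum : 1 - Real.exp ((1 - ρ * α) * t) ≤ 1 := by
          have := Real.exp_pos ((1 - ρ * α) * t); linarith
        calc K * ((1 - Real.exp ((1 - ρ * α) * t)) / (ρ * α - 1))
            ≤ K * (1 / (ρ * α - 1)) := by
              apply mul_le_mul_of_nonneg_left _ hK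
              gcongr <;> linarith
          _ = K / (ρ * α - 1) := by ring
      · apply mul_nonneg hK
        apply div_nonneg _ (by linarith)
        linarith
    have hkey := key t ht
    have hwt : |Real.exp t * v t| ≤ |v 0| + K / (ρ * α - 1) := le_trans hkey (by linarith)
    have hvt : |v t| ≤ (|v 0| + K / (ρ * α - 1)) * Real.exp (-t) := by
      have : |v t| = |Real.exp t * v t| * Real.exp (-t) := by
        rw [abs_mul, abs_of_pos (Real.exp_pos t), mul_comm (Real.exp t), mul_assoc,
          ← Real.exp_add]
        simp
      rw [this]
      apply mul_le_mul_of_nonneg_right hwt (Real.exp_pos _).le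
    calc |v t| ≤ (|v 0| + K / (ρ * α - 1)) * Real.exp (-t) := hvt
      _ ≤ (|v 0| + K / (ρ * α - 1)) * Real.exp (-σ * t) := by
          apply mul_le_mul_of_nonneg_left
          · apply Real.exp_le_exp.mpr
            nlinarith
          · have : 0 ≤ K / (ρ * α - 1) := by
              apply div_nonneg hK; linarith
            linarith [abs_nonneg (v 0)]
  · -- divergent case: rate σ < ρα ≤ 1
    push_neg at hcase
    have hσlt1 : σ < 1 := lt_of_lt_of_le hσ hcase
    have hc : (0:ℝ) < 1 - σ := by linarith
    refine ⟨|v 0| + K / (1 - σ), fun t ht => ?_⟩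
    -- bound the integral by K * exp((1-σ)t)/(1-σ)
    have hIbound : |∫ s in (0:ℝ)..t, K * Real.exp ((1 - ρ * α) * s)|
        ≤ K * Real.exp ((1 - σ) * t) / (1 - σ) := by
      have hmono : ∫ s in (0:ℝ)..t, K * Real.exp ((1 - ρ * α) * s)
          ≤ ∫ s in (0:ℝ)..t, K * Real.exp ((1 - σ) * s) := by
        apply intervalIntegral.integral_mono_on ht
        · exact (continuous_const.mul (Real.continuous_exp.comp
            (continuous_const.mul continuous_id))).intervalIntegrable 0 t
        · exact (continuous_const.mul (Real.continuous_exp.comp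
            (continuous_const.mul continuous_id))).intervalIntegrable 0 t
        · intro s hs
          apply mul_le_mul_of_nonneg_left _ hK
          apply Real.exp_le_exp.mpr
          nlinarith [hs.1]
      have hnonneg : 0 ≤ ∫ s in (0:ℝ)..t, K * Real.exp ((1 - ρ * α) * s) := by
        apply intervalIntegral.integral_nonneg ht
        intro s _
        positivity
      have hval : ∫ s in (0:ℝ)..t, K * Real.exp ((1 - σ) * s)
          = K * ((Real.exp ((1 - σ) * t) - 1) / (1 - σ)) := by
        rw [intervalIntegral.integral_const_mul, my_integral_exp_cmul _ (ne_of_gt hc)]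
      rw [abs_of_nonneg hnonneg]
      calc (∫ s in (0:ℝ)..t, K * Real.exp ((1 - ρ * α) * s))
          ≤ K * ((Real.exp ((1 - σ) * t) - 1) / (1 - σ)) := by rw [← hval]; exact hmono
        _ ≤ K * Real.exp ((1 - σ) * t) / (1 - σ) := by
            rw [mul_div_assoc]
            apply mul_le_mul_of_nonneg_left _ hK
            gcongr <;> linarith
    have hkey := key t ht
    have hexp1 : (1:ℝ) ≤ Real.exp ((1 - σ) * t) := by
      apply Real.one_le_exp
      positivity
    have hwt : |Real.exp t * v t| ≤ (|v 0| + K / (1 - σ)) * Real.exp ((1 - σ) * t) := by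
      calc |Real.exp t * v t| ≤ |v 0| + K * Real.exp ((1 - σ) * t) / (1 - σ) :=
            le_trans hkey (by linarith)
        _ ≤ |v 0| * Real.exp ((1 - σ) * t) + (K / (1 - σ)) * Real.exp ((1 - σ) * t) := by
            have h1 : |v 0| ≤ |v 0| * Real.exp ((1 - σ) * t) :=
              le_mul_of_one_le_right (abs_nonneg _) hexp1
            have h2 : K * Real.exp ((1 - σ) * t) / (1 - σ)
                = (K / (1 - σ)) * Real.exp ((1 - σ) * t) := by ring
            linarith [h2 ▸ le_refl (K * Real.exp ((1 - σ) * t) / (1 - σ))]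
        _ = (|v 0| + K / (1 - σ)) * Real.exp ((1 - σ) * t) := by ring
    have : |v t| = |Real.exp t * v t| * Real.exp (-t) := by
      rw [abs_mul, abs_of_pos (Real.exp_pos t), mul_comm (Real.exp t), mul_assoc,
        ← Real.exp_add]
      simp
    rw [this]
    calc |Real.exp t * v t| * Real.exp (-t)
        ≤ ((|v 0| + K / (1 - σ)) * Real.exp ((1 - σ) * t)) * Real.exp (-t) := by
          apply mul_le_mul_of_nonneg_right hwt (Real.exp_pos _).le
      _ = (|v 0| + K / (1 - σ)) * Real.exp (-σ * t) := by
          rw [mul_assoc, ← Real.exp_add]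
          ring_nf

/-- If `α > 1`, `v'(t) = -v(t) + 2 v(αt) - v(αt)²` on `[0,∞)` and
`|v(t)| = O(e^{-ρt})` for some `ρ ∈ (0,1)`, then `v(t) = O(e^{-t})` as `t → ∞`. -/
theorem bootstrap_exponential_decay (α : ℝ) (hα : 1 < α) (v : ℝ → ℝ) (C ρ : ℝ)
    (hρ : ρ ∈ Set.Ioo (0 : ℝ) 1)
    (hv : ∀ t : ℝ, 0 ≤ t →
      HasDerivAt v (-v t + 2 * v (α * t) - (v (α * t)) ^ 2) t)
    (hbound : ∀ t : ℝ, 0 ≤ t → |v t| ≤ C * Real.exp (-ρ * t)) :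
    ∃ C' t₀ : ℝ, ∀ t : ℝ, t₀ ≤ t → |v t| ≤ C' * Real.exp (-t) := by
  obtain ⟨hρ0, hρ1⟩ := hρ
  set β : ℝ := (1 + α) / 2 with hβ_def
  have hβ1 : 1 < β := by rw [hβ_def]; linarith
  have hβα : β < α := by rw [hβ_def]; linarith
  have hβ0 : 0 < β := lt_trans one_pos hβ1
  -- iterate the rate improvement
  have claim : ∀ k : ℕ, ∃ C₀ : ℝ, ∀ t : ℝ, 0 ≤ t →
      |v t| ≤ C₀ * Real.exp (-(min 1 (ρ * β ^ k)) * t) := by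
    intro k
    induction k with
    | zero =>
      refine ⟨C, fun t ht => ?_⟩
      have : min 1 (ρ * β ^ 0) = ρ := by
        simp [min_eq_right hρ1.le]
      rw [this]
      exact hbound t ht
    | succ k ih =>
      obtain ⟨C₀, hC₀⟩ := ih
      set r : ℝ := min 1 (ρ * β ^ k) with hr_def
      have hr0 : 0 < r := lt_min one_pos (by positivity)
      set σ : ℝ := min 1 (ρ * β ^ (k + 1)) with hσ_def
      have hσ1 : σ ≤ 1 := min_le_left _ _
      have hσr : σ < r * α := by
        have h1 : σ ≤ r * β := by
          rw [hσ_def, hr_def]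
          have : min 1 (ρ * β ^ k) * β = min β (ρ * β ^ (k + 1)) := by
            rw [min_mul_of_nonneg _ _ hβ0.le]
            congr 1
            · ring
            · ring
          rw [this]
          exact le_min (le_trans (min_le_left _ _) hβ1.le)
            (min_le_right _ _)
        have h2 : r * β < r * α := by
          apply mul_lt_mul_of_pos_left hβα hr0
        linarith
      exact my_step α hα v hv C₀ r σ hr0 hσ1 hσr hC₀
  -- choose k with ρ * β ^ k ≥ 1
  obtain ⟨k, hk⟩ := pow_unbounded_of_one_lt (1 / ρ) hβ1
  have hk1 : 1 ≤ ρ * β ^ k := by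
    rw [div_lt_iff₀ hρ0] at hk
    nlinarith
  obtain ⟨C₀, hC₀⟩ := claim k
  refine ⟨C₀, 0, fun t ht => ?_⟩
  have := hC₀ t ht
  rwa [min_eq_left hk1, neg_one_mul] at this
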